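/- arXiv:1907.03794 — 3 statements merged into one kernel-verified Lean document; each statement's English description precedes it below -/
import Mathlib

section
/- Let m and n be positive integers. For a positive integer k, let μ_k ⊂ U(1) denote the group of k-th roots of unity. Set A = μ_m ∪ μ_n and B = μ_{m+n} \ ((μ_m ∪ μ_n) ∩ μ_{m+n}). Then the subsets A and B of the unit circle alternate: traversing the circle, one alternately crosses a point of A and a point of B. -/
private lemma aux_div (m : ℕ) (hm : 0 < m) (θ : ℝ) :
    (∃ j : ℤ, θ = (j : ℝ) / m) ↔ ∃ j : ℤ, (m : ℝ) * θ = j := by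
  have hm' : (m : ℝ) ≠ 0 := Nat.cast_ne_zero.mpr hm.ne'
  constructor
  · rintro ⟨j, rfl⟩
    exact ⟨j, by field_simp⟩
  · rintro ⟨j, hj⟩
    refine ⟨j, ?_⟩
    rw [← hj]
    field_simp

private lemma key_between (m n : ℕ) (hm : 0 < m) (hn : 0 < n) (x y : ℝ)
    (hx : (∃ j : ℤ, (m:ℝ)*x = j) ∨ (∃ j : ℤ, (n:ℝ)*x = j))
    (hy : (∃ j : ℤ, (m:ℝ)*y = j) ∨ (∃ j : ℤ, (n:ℝ)*y = j))
    (hxy : x < y)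
    (hno : ∀ z, ((∃ j : ℤ, (m:ℝ)*z = j) ∨ (∃ j : ℤ, (n:ℝ)*z = j)) → ¬(x < z ∧ z < y)) :
    ∃! z : ℝ, (∃ j : ℤ, ((m:ℝ)+(n:ℝ))*z = j) ∧ x < z ∧ z < y := by
  have hm' : (0:ℝ) < m := by positivity
  have hn' : (0:ℝ) < n := by positivity
  have hmn : (0:ℝ) < (m:ℝ)+(n:ℝ) := by positivity
  set a : ℤ := ⌊(m:ℝ)*x⌋ with ha
  set b : ℤ := ⌊(n:ℝ)*x⌋ with hb
  have ha1 : (a:ℝ) ≤ (m:ℝ)*x := Int.floor_le _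
  have ha2 : (m:ℝ)*x < a+1 := Int.lt_floor_add_one _
  have hb1 : (b:ℝ) ≤ (n:ℝ)*x := Int.floor_le _
  have hb2 : (n:ℝ)*x < b+1 := Int.lt_floor_add_one _
  -- F1
  have hF1 : ((m:ℝ)+(n:ℝ))*x < (a:ℝ)+b+1 := by
    rcases hx with ⟨j, hj⟩ | ⟨j, hj⟩
    · have haj : a = j := by rw [ha, hj, Int.floor_intCast]
      have : (m:ℝ)*x = a := by rw [haj, ← hj]
      nlinarith
    · have hbj : b = j := by rw [hb, hj, Int.floor_intCast]
      have : (n:ℝ)*x = b := by rw [hbj, ← hj]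
      nlinarith
  -- F2
  have hF2 : (a:ℝ)+b+1 < ((m:ℝ)+(n:ℝ))*y := by
    have hmxy : (m:ℝ)*x < (m:ℝ)*y := mul_lt_mul_of_pos_left hxy hm'
    have hnxy : (n:ℝ)*x < (n:ℝ)*y := mul_lt_mul_of_pos_left hxy hn'
    rcases hy with ⟨j, hj⟩ | ⟨j, hj⟩
    · have h1 : a < j := by
        have : (a:ℝ) < j := by rw [← hj]; linarith
        exact_mod_cast this
      have h2 : (a:ℝ)+1 ≤ j := by exact_mod_cast h1
      nlinarith
    · have h1 : b < j := by
        have : (b:ℝ) < j := by rw [← hj]; linarith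
        exact_mod_cast this
      have h2 : (b:ℝ)+1 ≤ j := by exact_mod_cast h1
      nlinarith
  -- upper bounds
  have hupm : (m:ℝ)*y ≤ a+1 := by
    by_contra h
    push_neg at h
    refine hno (((a:ℝ)+1)/m) (Or.inl ⟨a+1, by push_cast; field_simp⟩) ⟨?_, ?_⟩
    · rw [lt_div_iff₀ hm']; nlinarith
    · rw [div_lt_iff₀ hm']; nlinarith
  have hupn : (n:ℝ)*y ≤ b+1 := by
    by_contra h
    push_neg at h
    refine hno (((b:ℝ)+1)/n) (Or.inr ⟨b+1, by push_cast; field_simp⟩) ⟨?_, ?_⟩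
    · rw [lt_div_iff₀ hn']; nlinarith
    · rw [div_lt_iff₀ hn']; nlinarith
  have hup : ((m:ℝ)+(n:ℝ))*y ≤ (a:ℝ)+b+2 := by nlinarith
  -- the candidate
  set z : ℝ := ((a:ℝ)+b+1)/((m:ℝ)+(n:ℝ)) with hz
  have hzval : ((m:ℝ)+(n:ℝ))*z = (a:ℝ)+b+1 := by rw [hz]; field_simp
  refine ⟨z, ⟨⟨a+b+1, by rw [hzval]; push_cast; ring⟩, ?_, ?_⟩, ?_⟩
  · rw [hz, lt_div_iff₀ hmn]; nlinarith
  · rw [hz, div_lt_iff₀ hmn]; nlinarith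
  · rintro z' ⟨⟨k, hk⟩, hz1, hz2⟩
    have hx' : ((m:ℝ)+(n:ℝ))*x < ((m:ℝ)+(n:ℝ))*z' := mul_lt_mul_of_pos_left hz1 hmn
    have hy' : ((m:ℝ)+(n:ℝ))*z' < ((m:ℝ)+(n:ℝ))*y := mul_lt_mul_of_pos_left hz2 hmn
    have hexp : ((m:ℝ)+(n:ℝ))*x = (m:ℝ)*x+(n:ℝ)*x := by ring
    have h1 : (a:ℝ)+b < k := by rw [← hk]; linarith
    have h2 : (k:ℝ) < (a:ℝ)+b+2 := by rw [← hk]; linarith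
    have h1' : a+b < k := by exact_mod_cast h1
    have h2' : k < a+b+2 := by exact_mod_cast h2
    have hk3 : k = a+b+1 := by omega
    apply mul_left_cancel₀ hmn.ne'
    rw [hk, hzval, hk3]
    push_cast
    ring

private lemma next_pt (m n : ℕ) (hm : 0 < m) (hn : 0 < n) (u : ℝ) :
    ∃ v : ℝ, u < v ∧ ((∃ j : ℤ, (m:ℝ)*v = j) ∨ (∃ j : ℤ, (n:ℝ)*v = j)) ∧
      ∀ z, ((∃ j : ℤ, (m:ℝ)*z = j) ∨ (∃ j : ℤ, (n:ℝ)*z = j)) → u < z → v ≤ z := by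
  have hm' : (0:ℝ) < m := by positivity
  have hn' : (0:ℝ) < n := by positivity
  set p : ℝ := ((⌊(m:ℝ)*u⌋:ℝ)+1)/m with hp
  set q : ℝ := ((⌊(n:ℝ)*u⌋:ℝ)+1)/n with hq
  refine ⟨min p q, ?_, ?_, ?_⟩
  · refine lt_min ?_ ?_
    · rw [hp, lt_div_iff₀ hm']
      have := Int.lt_floor_add_one ((m:ℝ)*u); linarith
    · rw [hq, lt_div_iff₀ hn']
      have := Int.lt_floor_add_one ((n:ℝ)*u); linarith
  · rcases min_cases p q with ⟨h, -⟩ | ⟨h, -⟩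
    · rw [h]; exact Or.inl ⟨⌊(m:ℝ)*u⌋+1, by rw [hp]; push_cast; field_simp⟩
    · rw [h]; exact Or.inr ⟨⌊(n:ℝ)*u⌋+1, by rw [hq]; push_cast; field_simp⟩
  · rintro z (⟨j, hj⟩ | ⟨j, hj⟩) huz
    · refine le_trans (min_le_left p q) ?_
      rw [hp, div_le_iff₀ hm']
      have h1 : ⌊(m:ℝ)*u⌋ < j := by
        have : (⌊(m:ℝ)*u⌋:ℝ) < j := by
          rw [← hj]
          calc (⌊(m:ℝ)*u⌋:ℝ) ≤ (m:ℝ)*u := Int.floor_le _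
          _ < (m:ℝ)*z := mul_lt_mul_of_pos_left huz hm'
        exact_mod_cast this
      have h2 : (⌊(m:ℝ)*u⌋:ℝ)+1 ≤ j := by exact_mod_cast h1
      rw [mul_comm] at hj
      linarith [hj ▸ h2]
    · refine le_trans (min_le_right p q) ?_
      rw [hq, div_le_iff₀ hn']
      have h1 : ⌊(n:ℝ)*u⌋ < j := by
        have : (⌊(n:ℝ)*u⌋:ℝ) < j := by
          rw [← hj]
          calc (⌊(n:ℝ)*u⌋:ℝ) ≤ (n:ℝ)*u := Int.floor_le _
          _ < (n:ℝ)*z := mul_lt_mul_of_pos_left huz hn'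
        exact_mod_cast this
      have h2 : (⌊(n:ℝ)*u⌋:ℝ)+1 ≤ j := by exact_mod_cast h1
      rw [mul_comm] at hj
      linarith [hj ▸ h2]

private lemma no_gap (m n : ℕ) (hm : 0 < m) (hn : 0 < n) (x y : ℝ)
    (hxA : ¬((∃ j : ℤ, (m:ℝ)*x = j) ∨ (∃ j : ℤ, (n:ℝ)*x = j)))
    (hyA : ¬((∃ j : ℤ, (m:ℝ)*y = j) ∨ (∃ j : ℤ, (n:ℝ)*y = j)))
    (hx : ∃ j : ℤ, ((m:ℝ)+(n:ℝ))*x = j) (hy : ∃ j : ℤ, ((m:ℝ)+(n:ℝ))*y = j)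
    (hxy : x < y)
    (hno : ∀ z, ((∃ j : ℤ, (m:ℝ)*z = j) ∨ (∃ j : ℤ, (n:ℝ)*z = j)) → ¬(x < z ∧ z < y)) :
    False := by
  have hm' : (0:ℝ) < m := by positivity
  have hn' : (0:ℝ) < n := by positivity
  obtain ⟨p, hp⟩ := hx
  obtain ⟨q, hq⟩ := hy
  set a : ℤ := ⌊(m:ℝ)*x⌋ with ha
  set b : ℤ := ⌊(n:ℝ)*x⌋ with hb
  have ha1 : (a:ℝ) ≤ (m:ℝ)*x := Int.floor_le _
  have ha2 : (m:ℝ)*x < a+1 := Int.lt_floor_add_one _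
  have hb1 : (b:ℝ) ≤ (n:ℝ)*x := Int.floor_le _
  have hb2 : (n:ℝ)*x < b+1 := Int.lt_floor_add_one _
  -- strict: x not in A
  have ha1' : (a:ℝ) < (m:ℝ)*x := by
    rcases lt_or_eq_of_le ha1 with h | h
    · exact h
    · exact absurd (Or.inl ⟨a, h.symm⟩) hxA
  have hb1' : (b:ℝ) < (n:ℝ)*x := by
    rcases lt_or_eq_of_le hb1 with h | h
    · exact h
    · exact absurd (Or.inr ⟨b, h.symm⟩) hxA
  -- upper bounds on y
  have hupm : (m:ℝ)*y < a+1 := by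
    rcases lt_trichotomy ((m:ℝ)*y) ((a:ℝ)+1) with h | h | h
    · exact h
    · exact absurd (Or.inl ⟨a+1, by push_cast; linarith⟩) hyA
    · exact absurd (hno (((a:ℝ)+1)/m) (Or.inl ⟨a+1, by push_cast; field_simp⟩)
        ⟨by rw [lt_div_iff₀ hm']; linarith, by rw [div_lt_iff₀ hm']; linarith⟩) not_false
  have hupn : (n:ℝ)*y < b+1 := by
    rcases lt_trichotomy ((n:ℝ)*y) ((b:ℝ)+1) with h | h | h
    · exact h
    · exact absurd (Or.inr ⟨b+1, by push_cast; linarith⟩) hyA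
    · exact absurd (hno (((b:ℝ)+1)/n) (Or.inr ⟨b+1, by push_cast; field_simp⟩)
        ⟨by rw [lt_div_iff₀ hn']; linarith, by rw [div_lt_iff₀ hn']; linarith⟩) not_false
  have hexp : ((m:ℝ)+(n:ℝ))*x = (m:ℝ)*x+(n:ℝ)*x := by ring
  have hexp' : ((m:ℝ)+(n:ℝ))*y = (m:ℝ)*y+(n:ℝ)*y := by ring
  have h1 : (a:ℝ)+b < p := by rw [← hp]; linarith
  have h2 : (p:ℝ) < a+b+2 := by rw [← hp]; linarith
  have h3 : (q:ℝ) < a+b+2 := by rw [← hq]; linarith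
  have h4 : p < q := by
    have : (p:ℝ) < q := by
      rw [← hp, ← hq]
      have : (0:ℝ) < (m:ℝ)+(n:ℝ) := by positivity
      exact mul_lt_mul_of_pos_left hxy this
    exact_mod_cast this
  have h1' : a+b < p := by exact_mod_cast h1
  have h3' : q < a+b+2 := by exact_mod_cast h3
  omega

private lemma aux_div' (c : ℝ) (hc : c ≠ 0) (θ : ℝ) :
    (∃ j : ℤ, θ = (j : ℝ) / c) ↔ ∃ j : ℤ, c * θ = j := by
  constructor
  · rintro ⟨j, rfl⟩
    exact ⟨j, by field_simp⟩
  · rintro ⟨j, hj⟩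
    refine ⟨j, ?_⟩
    rw [← hj]
    field_simp

/-- **Alternation of roots of unity** (Lemma `lemma-alternating-roots`).
We identify the unit circle with `ℝ/ℤ` via `θ ↦ exp(2πiθ)`; under this
identification `μ_k = {θ | ∃ j : ℤ, θ = j/k}` (a periodic subset of `ℝ`).
With `A = μ_m ∪ μ_n` and `B = μ_{m+n} \ A`, the sets `A` and `B` alternate:
between any two consecutive points of `A` lies exactly one point of `B`,
and between any two consecutive points of `B` lies exactly one point of `A`. -/
theorem alternating_roots_of_unity (m n : ℕ) (hm : 0 < m) (hn : 0 < n)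
    (A B : Set ℝ)
    (hA : A = {θ : ℝ | (∃ j : ℤ, θ = (j : ℝ) / m) ∨ (∃ j : ℤ, θ = (j : ℝ) / n)})
    (hB : B = {θ : ℝ | (∃ j : ℤ, θ = (j : ℝ) / (m + n)) ∧ θ ∉ A}) :
    (∀ x y : ℝ, x ∈ A → y ∈ A → x < y → (∀ z ∈ A, ¬(x < z ∧ z < y)) →
        ∃! z : ℝ, z ∈ B ∧ x < z ∧ z < y) ∧
    (∀ x y : ℝ, x ∈ B → y ∈ B → x < y → (∀ z ∈ B, ¬(x < z ∧ z < y)) →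
        ∃! z : ℝ, z ∈ A ∧ x < z ∧ z < y) := by
  have hm' : (m:ℝ) ≠ 0 := by positivity
  have hn' : (n:ℝ) ≠ 0 := by positivity
  have hmn' : (m:ℝ)+(n:ℝ) ≠ 0 := by positivity
  have hAmem : ∀ θ : ℝ, θ ∈ A ↔ ((∃ j : ℤ, (m:ℝ)*θ = j) ∨ (∃ j : ℤ, (n:ℝ)*θ = j)) := by
    intro θ
    rw [hA]
    simp only [Set.mem_setOf_eq, aux_div' (m:ℝ) hm' θ, aux_div' (n:ℝ) hn' θ]
  have hBmem : ∀ θ : ℝ, θ ∈ B ↔ ((∃ j : ℤ, ((m:ℝ)+(n:ℝ))*θ = j) ∧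
      ¬((∃ j : ℤ, (m:ℝ)*θ = j) ∨ (∃ j : ℤ, (n:ℝ)*θ = j))) := by
    intro θ
    rw [hB]
    simp only [Set.mem_setOf_eq, aux_div' ((m:ℝ)+(n:ℝ)) hmn' θ, hAmem]
  constructor
  · -- between consecutive A points, exactly one B point
    intro x y hx hy hxy hno
    rw [hAmem] at hx hy
    have hno' : ∀ z, ((∃ j : ℤ, (m:ℝ)*z = j) ∨ (∃ j : ℤ, (n:ℝ)*z = j)) → ¬(x < z ∧ z < y) := by
      intro z hz
      exact hno z ((hAmem z).mpr hz)
    obtain ⟨z, ⟨hz1, hz2, hz3⟩, huniq⟩ := key_between m n hm hn x y hx hy hxy hno'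
    refine ⟨z, ⟨(hBmem z).mpr ⟨hz1, fun h => hno' z h ⟨hz2, hz3⟩⟩, hz2, hz3⟩, ?_⟩
    rintro z' ⟨hz'B, h1, h2⟩
    rw [hBmem] at hz'B
    exact huniq z' ⟨hz'B.1, h1, h2⟩
  · -- between consecutive B points, exactly one A point
    intro x y hx hy hxy hno
    rw [hBmem] at hx hy
    have hnoB : ∀ z, (∃ j : ℤ, ((m:ℝ)+(n:ℝ))*z = j) →
        ¬((∃ j : ℤ, (m:ℝ)*z = j) ∨ (∃ j : ℤ, (n:ℝ)*z = j)) → ¬(x < z ∧ z < y) := by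
      intro z h1 h2
      exact hno z ((hBmem z).mpr ⟨h1, h2⟩)
    -- existence
    obtain ⟨v, hv1, hv2, hv3⟩ := next_pt m n hm hn x
    have hvy : v < y := by
      by_contra h
      push_neg at h
      refine no_gap m n hm hn x y hx.2 hy.2 hx.1 hy.1 hxy ?_
      intro z hz ⟨h1, h2⟩
      exact absurd (lt_of_lt_of_le h2 h) (not_lt.mpr (hv3 z hz h1))
    refine ⟨v, ⟨(hAmem v).mpr hv2, hv1, hvy⟩, ?_⟩
    -- uniqueness
    have huniq : ∀ z₁ z₂ : ℝ, z₁ ∈ A ∧ x < z₁ ∧ z₁ < y → z₂ ∈ A ∧ x < z₂ ∧ z₂ < y →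
        z₁ < z₂ → False := by
      rintro z₁ z₂ ⟨hz₁A, hz₁1, hz₁2⟩ ⟨hz₂A, hz₂1, hz₂2⟩ hlt
      rw [hAmem] at hz₁A hz₂A
      obtain ⟨w, hw1, hw2, hw3⟩ := next_pt m n hm hn z₁
      have hwz₂ : w ≤ z₂ := hw3 z₂ hz₂A hlt
      have hnoz : ∀ z, ((∃ j : ℤ, (m:ℝ)*z = j) ∨ (∃ j : ℤ, (n:ℝ)*z = j)) →
          ¬(z₁ < z ∧ z < w) := by
        rintro z hz ⟨h1, h2⟩
        exact absurd h2 (not_lt.mpr (hw3 z hz h1))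
      obtain ⟨u, ⟨hu1, hu2, hu3⟩, -⟩ := key_between m n hm hn z₁ w hz₁A hw2 hw1 hnoz
      refine hnoB u hu1 ?_ ⟨lt_trans hz₁1 hu2, lt_of_lt_of_le (lt_of_lt_of_le hu3 hwz₂) hz₂2.le⟩
      intro hzA
      exact hnoz u hzA ⟨hu2, hu3⟩
    rintro z' ⟨hz'A, h1, h2⟩
    by_contra hne
    rcases lt_or_gt_of_ne hne with h | h
    · exact huniq z' v ⟨hz'A, h1, h2⟩ ⟨(hAmem v).mpr hv2, hv1, hvy⟩ h
    · exact huniq v z' ⟨(hAmem v).mpr hv2, hv1, hvy⟩ ⟨hz'A, h1, h2⟩ h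
end

section
/- Let m, n be positive integers. There exist no integers a, b, c satisfying simultaneously: a/m < c/(m+n), b/n < c/(m+n), (c+1)/(m+n) < (a+1)/m, and (c+1)/(m+n) < (b+1)/n. -/
/-- The arithmetic core of the alternation lemma: there are no integers
`a, b, c` with `a/m, b/n < c/(m+n) < (c+1)/(m+n) < (a+1)/m, (b+1)/n`. -/
theorem no_integer_solution (m n : ℕ) (hm : 0 < m) (hn : 0 < n) :
    ¬ ∃ a b c : ℤ,
      (a : ℚ) / m < (c : ℚ) / (m + n) ∧
      (b : ℚ) / n < (c : ℚ) / (m + n) ∧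
      ((c : ℚ) + 1) / (m + n) < ((a : ℚ) + 1) / m ∧
      ((c : ℚ) + 1) / (m + n) < ((b : ℚ) + 1) / n := by
  rintro ⟨a, b, c, h1, h2, h3, h4⟩
  have hm' : (0:ℚ) < m := by exact_mod_cast hm
  have hn' : (0:ℚ) < n := by exact_mod_cast hn
  have hmn : (0:ℚ) < (m:ℚ) + n := by linarith
  rw [div_lt_div_iff₀ hm' hmn] at h1
  rw [div_lt_div_iff₀ hn' hmn] at h2
  rw [div_lt_div_iff₀ hmn hm'] at h3
  rw [div_lt_div_iff₀ hmn hn'] at h4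
  have e1 : (a:ℚ) + b < c := by nlinarith
  have e2 : (c:ℚ) < a + b + 1 := by nlinarith
  have i1 : a + b < c := by exact_mod_cast e1
  have i2 : c < a + b + 1 := by exact_mod_cast e2
  omega
end

section
/- Let M₀, M₁, M₂ be integral commutative monoids with homomorphisms f₁: M₁ → M₀ and f₂: M₂ → M₀, and let N = M₁ ×_{M₀} M₂ be the fiber product monoid. Write M̄ = M/M^× for the quotient of a monoid by its group of units. Assume: (a) f₁ and f₂ induce isomorphisms M̄₁ ≅ M̄₀ and M̄₂ ≅ M̄₀ on characteristic monoids, and (b) f₂ is surjective. Then the natural map N̄ → M̄₁ ×_{M̄₀} M̄₂ ≅ M̄₀ is an isomorphism. -/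
/-- Fiber products of integral (cancellative) commutative monoids and sharpened
monoids `M̄ = M/M^×`.  Two elements have the same image in `M̄` iff they are
`Associated`.  If `f₁ : M₁ → M₀` and `f₂ : M₂ → M₀` induce isomorphisms on
sharpened monoids and `f₂` is surjective, then the natural map
`N̄ → M̄₁ ×_{M̄₀} M̄₂ ≅ M̄₀` from the sharpening of the fiber product
`N = M₁ ×_{M₀} M₂` is an isomorphism (bijective: surjective and injective). -/
theorem fiberProduct_sharpening_iso
    (M₀ M₁ M₂ : Type*)
    [CancelCommMonoid M₀] [CancelCommMonoid M₁] [CancelCommMonoid M₂]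
    (f₁ : M₁ →* M₀) (f₂ : M₂ →* M₀)
    -- (a) `f₁`, `f₂` induce isomorphisms on characteristic monoids:
    (h1surj : ∀ y : M₀, ∃ x : M₁, Associated (f₁ x) y)
    (h1inj : ∀ x x' : M₁, Associated (f₁ x) (f₁ x') → Associated x x')
    (h2surj : ∀ y : M₀, ∃ x : M₂, Associated (f₂ x) y)
    (h2inj : ∀ x x' : M₂, Associated (f₂ x) (f₂ x') → Associated x x')
    -- (b) `f₂` is surjective:
    (hsurj : Function.Surjective f₂)
    -- the fiber product `N = M₁ ×_{M₀} M₂` as a submonoid of `M₁ × M₂`: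
    (N : Submonoid (M₁ × M₂))
    (hN : (N : Set (M₁ × M₂)) = {p | f₁ p.1 = f₂ p.2}) :
    (∀ y : M₀, ∃ p : N, Associated (f₁ (p : M₁ × M₂).1) y) ∧
    (∀ p q : N, Associated (f₁ (p : M₁ × M₂).1) (f₁ (q : M₁ × M₂).1) →
      Associated p q) := by
  have hmem : ∀ p : M₁ × M₂, p ∈ N ↔ f₁ p.1 = f₂ p.2 := by
    intro p
    rw [← SetLike.mem_coe, hN]; rfl
  constructor
  · intro y
    obtain ⟨x₁, hx₁⟩ := h1surj y
    obtain ⟨x₂, hx₂⟩ := hsurj (f₁ x₁)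
    exact ⟨⟨(x₁, x₂), (hmem (x₁, x₂)).2 hx₂.symm⟩, hx₁⟩
  · rintro ⟨⟨a₁, a₂⟩, ha⟩ ⟨⟨b₁, b₂⟩, hb⟩ h
    have ha' := (hmem _).1 ha
    have hb' := (hmem _).1 hb
    obtain ⟨u, hu⟩ := h1inj a₁ b₁ h
    have h2 : Associated (f₂ a₂) (f₂ b₂) := by
      rw [← ha', ← hb']; exact h
    obtain ⟨v, hv⟩ := h2inj a₂ b₂ h2
    -- f₁ u = f₂ v
    have key : f₁ u = f₂ v := by
      have e1 : f₁ a₁ * f₁ u = f₂ a₂ * f₂ v := by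
        rw [← map_mul, ← map_mul, hu, hv, hb']
      rw [ha'] at e1
      exact mul_left_cancel e1
    have key' : f₁ ((u⁻¹ : M₁ˣ) : M₁) = f₂ ((v⁻¹ : M₂ˣ) : M₂) := by
      have e1 : f₁ (u : M₁) * f₁ ((u⁻¹ : M₁ˣ) : M₁) = 1 := by
        rw [← map_mul, Units.mul_inv, map_one]
      have e2 : f₂ (v : M₂) * f₂ ((v⁻¹ : M₂ˣ) : M₂) = 1 := by
        rw [← map_mul, Units.mul_inv, map_one]
      rw [key] at e1
      exact mul_left_cancel (e1.trans e2.symm)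
    refine ⟨⟨⟨((u : M₁), (v : M₂)), (hmem _).2 key⟩,
      ⟨(((u⁻¹ : M₁ˣ) : M₁), ((v⁻¹ : M₂ˣ) : M₂)), (hmem _).2 key'⟩, ?_, ?_⟩, ?_⟩
    · ext <;> simp
    · ext <;> simp
    · ext <;> simp [hu, hv]
end
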